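/- Define t(p,q) = −7(p⁴ + q⁴) + 14(p³ + q³) − 6pq(p + q − pq − 1) − (17/2)(p² + q²) + (3/2)(p + q), and for p ∈ ((7−√7)/14, 1/2] define q(p) = 1/2 − (1/14)·√( 84p² − 84p + 28 + 7·√(−640p⁴ + 1280p³ − 880p² + 240p + 9) ). Then for every p with (7−√7)/14 < p ≤ 1/2: q(p) > 0, t(p, q(p)) = 0, and t(p,q) < 0 for every q with 0 < q < q(p). -/
import Mathlib


/-- `t(p,q) = −7(p⁴+q⁴) + 14(p³+q³) − 6pq(p+q−pq−1) − (17/2)(p²+q²) + (3/2)(p+q)`. -/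
noncomputable def tpq (p q : ℝ) : ℝ :=
  -7*(p^4 + q^4) + 14*(p^3 + q^3) - 6*p*q*(p + q - p*q - 1)
    - 17/2*(p^2 + q^2) + 3/2*(p + q)

/-- `q(p) = 1/2 − (1/14)·√(84p² − 84p + 28 + 7√(−640p⁴ + 1280p³ − 880p² + 240p + 9))`. -/
noncomputable def qOf (p : ℝ) : ℝ :=
  1/2 - (1/14) * Real.sqrt (84*p^2 - 84*p + 28 +
    7 * Real.sqrt (-640*p^4 + 1280*p^3 - 880*p^2 + 240*p + 9))

set_option maxHeartbeats 1000000 in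
/-- for `(7−√7)/14 < p ≤ 1/2` one has `q(p) > 0`, `t(p, q(p)) = 0`,
and `t(p,q) < 0` for every `q` with `0 < q < q(p)`. -/
theorem stmt_17 (p : ℝ) (hp1 : (7 - Real.sqrt 7)/14 < p) (hp2 : p ≤ 1/2) :
    0 < qOf p ∧ tpq p (qOf p) = 0 ∧ ∀ q : ℝ, 0 < q → q < qOf p → tpq p q < 0 := by
  have h7 : (Real.sqrt 7)^2 = 7 := Real.sq_sqrt (by norm_num)
  have hx : (7 - 14*p)^2 < 7 := by
    have h1 : 7 - 14*p < Real.sqrt 7 := by linarith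
    have h2 : 0 ≤ 7 - 14*p := by linarith
    nlinarith [Real.sqrt_nonneg 7]
  -- D = -640 x² + 80 x + 29 with x = (p-1/2)², and 196 x < 7 from hx
  have hD0 : (0:ℝ) ≤ -640*p^4 + 1280*p^3 - 880*p^2 + 240*p + 9 := by
    nlinarith [sq_nonneg (p - 1/2), sq_nonneg (p^2 - p)]
  set sD := Real.sqrt (-640*p^4 + 1280*p^3 - 880*p^2 + 240*p + 9) with hsDdef
  have hD2 : sD^2 = -640*p^4 + 1280*p^3 - 880*p^2 + 240*p + 9 := Real.sq_sqrt hD0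
  have hDn : 0 ≤ sD := Real.sqrt_nonneg _
  -- sD < 6 - 12 x  since (6-12x)² - D = 784(x - 1/28)(x - 1/4) > 0 for x < 1/28
  have hsDlt : sD < 6 - 12*(p - 1/2)^2 := by
    nlinarith [hD2, hDn, hx, sq_nonneg (p - 1/2)]
  have hI0 : (0:ℝ) ≤ 84*p^2 - 84*p + 28 + 7*sD := by nlinarith [sq_nonneg (2*p - 1)]
  set sI := Real.sqrt (84*p^2 - 84*p + 28 + 7*sD) with hsIdef
  have hI2 : sI^2 = 84*p^2 - 84*p + 28 + 7*sD := Real.sq_sqrt hI0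
  have hIn : 0 ≤ sI := Real.sqrt_nonneg _
  have hIlt : sI < 7 := by nlinarith [hI2, hIn, hsDlt]
  have hq : qOf p = 1/2 - (1/14) * sI := by rw [qOf, hsIdef, hsDdef]
  clear_value sD sI
  -- key factorization: 112 * t(p,q) = -(28y-12x-1-sD)(28y-12x-1+sD)
  have key : ∀ q : ℝ, tpq p q = -(1/112) *
      (28*(q - 1/2)^2 - 12*(p - 1/2)^2 - 1 - sD) *
      (28*(q - 1/2)^2 - 12*(p - 1/2)^2 - 1 + sD) := by
    intro q
    rw [tpq]
    linear_combination (-(1/112)) * hD2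
  refine ⟨by rw [hq]; linarith, ?_, ?_⟩
  · rw [key]
    have : (qOf p - 1/2)^2 = (84*p^2 - 84*p + 28 + 7*sD)/196 := by
      rw [hq]; nlinarith [hI2]
    rw [this]; ring
  · intro q hq0 hqlt
    have h1 : (1/14) * sI < 1/2 - q := by rw [hq] at hqlt; linarith
    have h2' : ((1/14)*sI)^2 < (1/2 - q)^2 :=
      pow_lt_pow_left₀ h1 (by positivity) two_ne_zero
    have h2 : (q - 1/2)^2 > (84*p^2 - 84*p + 28 + 7*sD)/196 := by
      nlinarith [h2', hI2]
    have hA : 28*(q - 1/2)^2 - 12*(p - 1/2)^2 - 1 - sD > 0 := by nlinarith [h2]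
    have hB : 28*(q - 1/2)^2 - 12*(p - 1/2)^2 - 1 + sD > 0 := by linarith
    rw [key]
    nlinarith [mul_pos hA hB]
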